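/- Let E be a pseudo effect algebra satisfying (RDP) and let {mᵢ}ᵢ∈I be a nonempty family in J(E) that is bounded above with respect to ≤⁺; set d(x) := supᵢ mᵢ(x) for x ∈ E. Then the supremum ⋁ᵢ mᵢ in J(E) satisfies (⋁ᵢ mᵢ)(x) = sup{d(x₁) + ⋯ + d(xₙ) : x = x₁ + ⋯ + xₙ, x₁, …, xₙ ∈ E} for all x ∈ E. Dually, if {mᵢ}ᵢ∈I is bounded below and e(x) := infᵢ mᵢ(x), then (⋀ᵢ mᵢ)(x) = inf{e(x₁) + ⋯ + e(xₙ) : x = x₁ + ⋯ + xₙ, x₁, …, xₙ ∈ E} for all x ∈ E. -/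

import Mathlib

/-! Put `d x = ⨆ i, mᵢ x` and let `D x` be the supremum of `d x₁ + ⋯ + d xₙ` over all
decompositions `x = x₁ + ⋯ + xₙ`. Concatenating decompositions makes `D` superadditive; since
`d` is subadditive, refining a decomposition of `a + b` by RDP makes `D` subadditive. So `D` is a
signed measure with `mᵢ ≤ d ≤ D`, and every signed measure above all `mᵢ` is above `d`, hence
above `D`: thus `D` is the supremum in `J(E)`. The infimum formula follows by negating the family.
-/

/-- A pseudo effect algebra: a partial algebra `(E; +, 0, 1)` where the partial
addition is encoded as `padd : E → E → Option E` (`padd a b = some c` means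
`a + b` is defined and equals `c`). -/
class PseudoEffectAlgebra (E : Type) where
  padd : E → E → Option E
  pzero : E
  pone : E
  /-- (i) `a+b` and `(a+b)+c` exist iff `b+c` and `a+(b+c)` exist ... -/
  assoc_defined : ∀ a b c : E,
    (∃ x, padd a b = some x ∧ (padd x c).isSome) ↔
      (∃ y, padd b c = some y ∧ (padd a y).isSome)
  /-- ... and in this case `(a+b)+c = a+(b+c)`. -/
  assoc_eq : ∀ a b c x y : E, padd a b = some x → padd b c = some y →
    padd x c = padd a y
  /-- (ii) there is exactly one `d` with `a + d = 1`. -/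
  exists_unique_right : ∀ a : E, ∃! d, padd a d = some pone
  /-- (ii) there is exactly one `e` with `e + a = 1`. -/
  exists_unique_left : ∀ a : E, ∃! e, padd e a = some pone
  /-- (iii) if `a+b` exists, there are `d, e` with `a+b = d+a = b+e`. -/
  shift : ∀ a b c : E, padd a b = some c →
    ∃ d e, padd d a = some c ∧ padd b e = some c
  /-- (iv) if `1+a` exists then `a = 0`. -/
  one_add : ∀ a : E, (padd pone a).isSome → a = pzero
  /-- (iv) if `a+1` exists then `a = 0`. -/
  add_one : ∀ a : E, (padd a pone).isSome → a = pzero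

namespace PseudoEffectAlgebra

variable {E : Type} [PseudoEffectAlgebra E]

/-- The induced partial order: `a ≤ b` iff `b = a + c` for some `c ∈ E`. -/
def pLe (a b : E) : Prop := ∃ c, padd a c = some b

/-- The Riesz Decomposition Property (RDP). -/
def RDP (E : Type) [PseudoEffectAlgebra E] : Prop :=
  ∀ a₁ a₂ b₁ b₂ c : E, padd a₁ a₂ = some c → padd b₁ b₂ = some c →
    ∃ d₁ d₂ d₃ d₄ : E, padd d₁ d₂ = some a₁ ∧ padd d₃ d₄ = some a₂ ∧
      padd d₁ d₃ = some b₁ ∧ padd d₂ d₄ = some b₂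

/-- A signed measure on `E`. -/
def IsSignedMeasure (m : E → ℝ) : Prop :=
  ∀ a b c : E, padd a b = some c → m c = m a + m b

/-- A (positive) measure on `E`. -/
def IsMeasure (m : E → ℝ) : Prop :=
  IsSignedMeasure m ∧ ∀ a : E, 0 ≤ m a

/-- A state on `E`. -/
def IsState (s : E → ℝ) : Prop := IsMeasure s ∧ s pone = 1

/-- A Jordan signed measure: a difference of two measures. -/
def IsJordan (m : E → ℝ) : Prop :=
  ∃ m₁ m₂ : E → ℝ, IsMeasure m₁ ∧ IsMeasure m₂ ∧ m = m₁ - m₂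

/-- `m ≤⁺ m'` iff `m' - m` is a (positive) measure. -/
def MLe (m m' : E → ℝ) : Prop := IsMeasure (m' - m)

/-- The (partial) sum `x₁ + ⋯ + xₙ` of a nonempty list of elements of `E`. -/
def lsum : List E → Option E
  | [] => some pzero
  | [a] => some a
  | a :: b :: l => (lsum (b :: l)).bind (fun s => padd a s)

/-- `m` is the supremum, in the po-group `J(E)` of Jordan signed measures ordered
by `≤⁺`, of the set `S`. -/
def IsSupIn (S : Set (E → ℝ)) (m : E → ℝ) : Prop :=
  IsJordan m ∧ (∀ t ∈ S, MLe t m) ∧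
    ∀ h : E → ℝ, IsJordan h → (∀ t ∈ S, MLe t h) → MLe m h

/-- `m` is the infimum, in the po-group `J(E)` of Jordan signed measures ordered
by `≤⁺`, of the set `S`. -/
def IsInfIn (S : Set (E → ℝ)) (m : E → ℝ) : Prop :=
  IsJordan m ∧ (∀ t ∈ S, MLe m t) ∧
    ∀ h : E → ℝ, IsJordan h → (∀ t ∈ S, MLe h t) → MLe h m

lemma MLe.le {m m' : E → ℝ} (h : MLe m m') : m ≤ m' :=
  fun a => sub_nonneg.mp (h.2 a)

lemma mle_neg_neg {m m' : E → ℝ} : MLe (-m) (-m') ↔ MLe m' m := by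
  rw [MLe, MLe, neg_sub_neg]

lemma IsSignedMeasure.add {m m' : E → ℝ} (h : IsSignedMeasure m) (h' : IsSignedMeasure m') :
    IsSignedMeasure (m + m') := by
  intro a b c hc
  simp only [Pi.add_apply, h a b c hc, h' a b c hc]
  ring

lemma IsSignedMeasure.sub {m m' : E → ℝ} (h : IsSignedMeasure m) (h' : IsSignedMeasure m') :
    IsSignedMeasure (m - m') := by
  intro a b c hc
  simp only [Pi.sub_apply, h a b c hc, h' a b c hc]
  ring

lemma IsMeasure.add {m m' : E → ℝ} (h : IsMeasure m) (h' : IsMeasure m') :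
    IsMeasure (m + m') :=
  ⟨h.1.add h'.1, fun a => add_nonneg (h.2 a) (h'.2 a)⟩

lemma mle_iff_le {m m' : E → ℝ} (h : IsSignedMeasure m) (h' : IsSignedMeasure m') :
    MLe m m' ↔ m ≤ m' :=
  ⟨MLe.le, fun hle => ⟨h'.sub h, fun a => sub_nonneg.mpr (hle a)⟩⟩

lemma IsJordan.isSignedMeasure {m : E → ℝ} (h : IsJordan m) : IsSignedMeasure m := by
  obtain ⟨p, q, hp, hq, rfl⟩ := h
  exact hp.1.sub hq.1

lemma IsJordan.neg {m : E → ℝ} (h : IsJordan m) : IsJordan (-m) := by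
  obtain ⟨p, q, hp, hq, rfl⟩ := h
  exact ⟨q, p, hq, hp, neg_sub p q⟩

lemma IsJordan.of_mle {m m' : E → ℝ} (hm : IsJordan m) (h : MLe m m') : IsJordan m' := by
  obtain ⟨p, q, hp, hq, rfl⟩ := hm
  exact ⟨m' - (p - q) + p, q, IsMeasure.add h hp, hq, by abel⟩

lemma IsSupIn.unique {S : Set (E → ℝ)} {v w : E → ℝ} (hv : IsSupIn S v) (hw : IsSupIn S w) :
    v = w :=
  le_antisymm (hv.2.2 w hw.1 hw.2.1).le (hw.2.2 v hv.1 hv.2.1).le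

lemma IsInfIn.neg {S : Set (E → ℝ)} {w : E → ℝ} (hw : IsInfIn S w) : IsSupIn (-S) (-w) := by
  refine ⟨hw.1.neg, fun t ht => ?_, fun h hJ hub => ?_⟩
  · rw [← neg_neg t, mle_neg_neg]
    exact hw.2.1 (-t) ht
  · have hlow : ∀ t ∈ S, MLe (-h) t := fun t ht => by
      rw [← neg_neg t, mle_neg_neg]
      exact hub (-t) (Set.neg_mem_neg.mpr ht)
    rw [← neg_neg h, mle_neg_neg]
    exact hw.2.2 (-h) hJ.neg hlow

lemma padd_assoc_of_eq_some {x s a b c : E} (hxs : padd x s = some a) (hab : padd a b = some c) :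
    ∃ t, padd s b = some t ∧ padd x t = some c := by
  obtain ⟨t, hst, -⟩ := (assoc_defined x s b).mp ⟨a, hxs, by simp [hab]⟩
  exact ⟨t, hst, (assoc_eq x s b a t hxs hst).symm.trans hab⟩

lemma lsum_cons {l : List E} (hl : l ≠ []) (x : E) :
    lsum (x :: l) = (lsum l).bind (padd x) := by
  cases l with
  | nil => exact absurd rfl hl
  | cons y l => rfl

lemma lsum_induction {P : List E → E → Prop} (singleton : ∀ x, P [x] x)
    (cons : ∀ x s c l, l ≠ [] → lsum l = some s → padd x s = some c → P l s → P (x :: l) c) :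
    ∀ {l : List E} {c : E}, l ≠ [] → lsum l = some c → P l c
  | [], _, hl, _ => absurd rfl hl
  | [x], _, _, h => Option.some.inj h ▸ singleton x
  | x :: y :: l, _, _, h => by
    obtain ⟨s, hs, hxs⟩ := Option.bind_eq_some_iff.mp h
    exact cons x s _ (y :: l) (List.cons_ne_nil _ _) hs hxs
      (lsum_induction singleton cons (List.cons_ne_nil _ _) hs)

lemma lsum_append {l₁ l₂ : List E} {a b c : E} (h₁ : l₁ ≠ []) (h₂ : l₂ ≠ [])
    (ha : lsum l₁ = some a) (hb : lsum l₂ = some b) (hc : padd a b = some c) :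
    lsum (l₁ ++ l₂) = some c := by
  refine lsum_induction (P := fun l₁ a => ∀ {c}, padd a b = some c → lsum (l₁ ++ l₂) = some c)
    (fun x c hc => ?_) (fun x s a l hl _ hxs ih c hc => ?_) h₁ ha hc
  · rw [List.singleton_append, lsum_cons h₂, hb]
    exact hc
  · obtain ⟨t, hsb, hxt⟩ := padd_assoc_of_eq_some hxs hc
    rw [List.cons_append, lsum_cons (by simp [hl]), ih hsb]
    exact hxt

lemma IsSignedMeasure.apply_eq_sum_of_lsum {g : E → ℝ} (hg : IsSignedMeasure g) {l : List E}
    {x : E} (hl : l ≠ []) (hx : lsum l = some x) : g x = (l.map g).sum := by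
  refine lsum_induction (P := fun l x => g x = (l.map g).sum) (fun x => by simp)
    (fun x s c l _ _ hxs ih => ?_) hl hx
  rw [hg x s c hxs, ih, List.map_cons, List.sum_cons]

def decompSums (d : E → ℝ) (x : E) : Set ℝ :=
  {r | ∃ l : List E, l ≠ [] ∧ lsum l = some x ∧ r = (l.map d).sum}

section decompSums

variable {d : E → ℝ}

lemma self_mem_decompSums (x : E) : d x ∈ decompSums d x :=
  ⟨[x], List.cons_ne_nil _ _, rfl, by simp⟩

lemma add_mem_decompSums {a b c : E} {r r' : ℝ} (hr : r ∈ decompSums d a)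
    (hr' : r' ∈ decompSums d b) (hc : padd a b = some c) : r + r' ∈ decompSums d c := by
  obtain ⟨l, hl, ha, rfl⟩ := hr
  obtain ⟨l', hl', hb, rfl⟩ := hr'
  exact ⟨l ++ l', by simp [hl], lsum_append hl hl' ha hb hc, by simp⟩

lemma decompSums_neg (x : E) : decompSums (-d) x = -decompSums d x := by
  have hsum : ∀ l : List E, (l.map (-d)).sum = -(l.map d).sum := by
    intro l
    induction l <;> simp_all [add_comm]
  ext r
  simp only [decompSums, Set.mem_neg, Set.mem_ofPred, hsum, neg_eq_iff_eq_neg]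

lemma le_of_mem_decompSums {g : E → ℝ} (hg : IsSignedMeasure g) (hdg : d ≤ g) {x : E} {r : ℝ}
    (hr : r ∈ decompSums d x) : r ≤ g x := by
  obtain ⟨l, hl, hx, rfl⟩ := hr
  rw [hg.apply_eq_sum_of_lsum hl hx]
  exact List.sum_le_sum fun y _ => hdg y

lemma bddAbove_decompSums {g : E → ℝ} (hg : IsSignedMeasure g) (hdg : d ≤ g) (x : E) :
    BddAbove (decompSums d x) :=
  ⟨g x, fun _ hr => le_of_mem_decompSums hg hdg hr⟩

variable (hRDP : RDP E) (hd : ∀ a b c : E, padd a b = some c → d c ≤ d a + d b)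
include hRDP hd

/-- RDP splits each summand of a decomposition of `a + b` into an `a`-part and a `b`-part;
subadditivity of `d` then bounds the old sum by the two new ones. -/
lemma exists_le_add_of_mem_decompSums {a b c : E} {r : ℝ} (hr : r ∈ decompSums d c)
    (hab : padd a b = some c) :
    ∃ ra ∈ decompSums d a, ∃ rb ∈ decompSums d b, r ≤ ra + rb := by
  obtain ⟨l, hl, hc, rfl⟩ := hr
  refine lsum_induction (P := fun l c => ∀ {a b}, padd a b = some c →
      ∃ ra ∈ decompSums d a, ∃ rb ∈ decompSums d b, (l.map d).sum ≤ ra + rb)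
    (fun x a b hab => ?_) (fun x s c l _ _ hxs ih a b hab => ?_) hl hc hab
  · exact ⟨d a, self_mem_decompSums a, d b, self_mem_decompSums b, by simpa using hd a b x hab⟩
  · obtain ⟨d₁, d₂, d₃, d₄, hx, hs, ha, hb⟩ := hRDP x s a b c hxs hab
    obtain ⟨ra, hra, rb, hrb, hle⟩ := ih hs
    refine ⟨d d₁ + ra, add_mem_decompSums (self_mem_decompSums d₁) hra ha,
      d d₂ + rb, add_mem_decompSums (self_mem_decompSums d₂) hrb hb, ?_⟩
    simp only [List.map_cons, List.sum_cons]
    linarith [hd d₁ d₂ x hx]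

lemma isSignedMeasure_sSup_decompSums {g : E → ℝ} (hg : IsSignedMeasure g) (hdg : d ≤ g) :
    IsSignedMeasure fun x => sSup (decompSums d x) := by
  intro a b c hc
  have hbdd := bddAbove_decompSums hg hdg
  have hne : ∀ x, (decompSums d x).Nonempty := fun x => ⟨d x, self_mem_decompSums x⟩
  refine le_antisymm (csSup_le (hne c) fun r hr => ?_) ?_
  · obtain ⟨ra, hra, rb, hrb, hle⟩ := exists_le_add_of_mem_decompSums hRDP hd hr hc
    exact hle.trans (add_le_add (le_csSup (hbdd a) hra) (le_csSup (hbdd b) hrb))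
  · rw [← csSup_add (hne a) (hbdd a) (hne b) (hbdd b)]
    refine csSup_le_csSup (hbdd c) ((hne a).add (hne b)) ?_
    rintro _ ⟨r, hr, r', hr', rfl⟩
    exact add_mem_decompSums hr hr' hc

end decompSums

lemma isSupIn_sSup_decompSums (hRDP : RDP E) {ι : Type} [Nonempty ι] {m : ι → E → ℝ}
    (hm : ∀ i, IsJordan (m i)) {g : E → ℝ} (hg : IsSignedMeasure g) (hmg : ∀ i, m i ≤ g) :
    IsSupIn (Set.range m) fun x => sSup (decompSums (fun y => ⨆ i, m i y) x) := by
  set d : E → ℝ := fun y => ⨆ i, m i y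
  have hmd : ∀ i, m i ≤ d := fun i y =>
    le_ciSup ⟨g y, by rintro _ ⟨j, rfl⟩; exact hmg j y⟩ i
  have hdle : ∀ h : E → ℝ, (∀ i, m i ≤ h) → d ≤ h := fun h hmh y => ciSup_le fun i => hmh i y
  have hd : ∀ a b c : E, padd a b = some c → d c ≤ d a + d b := fun a b c hc =>
    ciSup_le fun i => (hm i).isSignedMeasure a b c hc ▸ add_le_add (hmd i a) (hmd i b)
  have hD := isSignedMeasure_sSup_decompSums hRDP hd hg (hdle g hmg)
  have hmD : ∀ i, MLe (m i) fun x => sSup (decompSums d x) := fun i =>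
    (mle_iff_le (hm i).isSignedMeasure hD).mpr fun x =>
      (hmd i x).trans (le_csSup (bddAbove_decompSums hg (hdle g hmg) x) (self_mem_decompSums x))
  obtain ⟨i₀⟩ := ‹Nonempty ι›
  refine ⟨(hm i₀).of_mle (hmD i₀), by rintro _ ⟨i, rfl⟩; exact hmD i, fun h hJ hub => ?_⟩
  have hdh : d ≤ h := hdle h fun i => (hub (m i) ⟨i, rfl⟩).le
  rw [mle_iff_le hD hJ.isSignedMeasure]
  exact fun x => csSup_le ⟨d x, self_mem_decompSums x⟩ fun r hr =>
    le_of_mem_decompSums hJ.isSignedMeasure hdh hr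

/-- Theorem 3.4(b),(c): formulas for the supremum and infimum in
`J(E)` of a nonempty bounded family of Jordan signed measures. -/
theorem stmt5 (hRDP : RDP E) {ι : Type} [Nonempty ι] (m : ι → E → ℝ)
    (hm : ∀ i, IsJordan (m i)) :
    ((∃ b, IsJordan b ∧ ∀ i, MLe (m i) b) →
      ∀ v : E → ℝ, IsSupIn (Set.range m) v → ∀ x : E,
        v x = sSup {r : ℝ | ∃ l : List E, l ≠ [] ∧ lsum l = some x ∧
          r = (l.map (fun y => ⨆ i, m i y)).sum}) ∧
    ((∃ b, IsJordan b ∧ ∀ i, MLe b (m i)) →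
      ∀ w : E → ℝ, IsInfIn (Set.range m) w → ∀ x : E,
        w x = sInf {r : ℝ | ∃ l : List E, l ≠ [] ∧ lsum l = some x ∧
          r = (l.map (fun y => ⨅ i, m i y)).sum}) := by
  refine ⟨fun ⟨b, hb, hmb⟩ v hv x => ?_, fun ⟨b, hb, hbm⟩ w hw x => ?_⟩
  · exact congrFun (hv.unique (isSupIn_sSup_decompSums hRDP hm hb.isSignedMeasure
      fun i => (hmb i).le)) x
  · have hsup := isSupIn_sSup_decompSums hRDP (m := -m) (fun i => (hm i).neg)
      hb.neg.isSignedMeasure fun i => neg_le_neg (hbm i).le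
    have hw' := hw.neg
    rw [Set.neg_range'] at hw'
    have hneg : (fun y => ⨆ i, (-m) i y) = -fun y => ⨅ i, m i y := by
      funext y
      change (⨆ i, -m i y) = -⨅ i, m i y
      rw [iSup, ← Set.neg_range, Real.sSup_neg, iInf]
    have hwx := congrFun (hw'.unique hsup) x
    rw [hneg, decompSums_neg, Real.sSup_neg] at hwx
    exact neg_inj.mp hwx

end PseudoEffectAlgebra
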